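/- Let N ≥ 1 and let (a_1, …, a_N) ∈ ℝ^N and A, C > 0 satisfy: (1) Σ_{i=1}^N a_i = 0; (2) Σ_{i=1}^N a_i² ≤ C; (3) |a_i| ≤ A for each 1 ≤ i ≤ N. If Z_1, …, Z_N, W_1, …, W_N are 2N independent standard real Gaussian random variables, then for every t > 0 one has P(|Σ_{i=1}^N a_i·(Z_i² + W_i²)| ≥ t) ≤ 2·(A·t/(2C) + 1)^{C/A²}·exp(−t/(2A)). -/

import Mathlib

/-!
Write the sum as `∑ⱼ bⱼ Vⱼ²` over the `2N` independent standard Gaussians `Vⱼ`, each weight `aᵢ`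
appearing twice. Since `𝔼 exp (λ b V²) = (1 - 2λb)^(-1/2)`, the Chernoff bound gives
`P(∑ⱼ bⱼ Vⱼ² ≥ t) ≤ exp (-λt - ½ ∑ⱼ log (1 - 2λbⱼ))`. The weights sum to zero, so the linear terms
of `-log (1 - x)` cancel, and comparing power series termwise gives
`-log (1 - x) - x ≤ (x / u)² (-log (1 - u) - u)` for `|x| ≤ u < 1`. With `∑ⱼ bⱼ² ≤ 2C`, `|bⱼ| ≤ A`
and `2λA = r / (1 + r)`, `r = At / (2C)`, the exponent becomes the stated bound; the lower tail is
the upper tail for the weights `-aᵢ`.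
-/

open MeasureTheory ProbabilityTheory Real

lemma hasSum_pow_add_two_div {x : ℝ} (hx : |x| < 1) :
    HasSum (fun n : ℕ => x ^ (n + 2) / (n + 2)) (-log (1 - x) - x) := by
  have h := (hasSum_nat_add_iff' 1).mpr (hasSum_pow_div_log_of_abs_lt_one hx)
  simpa [add_assoc, one_add_one_eq_two] using h

lemma neg_log_one_sub_sub_le {u x : ℝ} (hu0 : 0 < u) (hu1 : u < 1) (hx : |x| ≤ u) :
    -log (1 - x) - x ≤ x ^ 2 / u ^ 2 * (-log (1 - u) - u) := by
  refine hasSum_le (fun n => ?_) (hasSum_pow_add_two_div (hx.trans_lt hu1))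
    ((hasSum_pow_add_two_div (by rwa [abs_of_pos hu0])).mul_left _)
  have hxn : x ^ (n + 2) ≤ x ^ 2 * u ^ n := calc
    x ^ (n + 2) ≤ |x| ^ 2 * |x| ^ n := by rw [← pow_add, add_comm, ← abs_pow]; exact le_abs_self _
    _ ≤ x ^ 2 * u ^ n := by rw [sq_abs]; gcongr
  calc x ^ (n + 2) / (n + 2) ≤ x ^ 2 * u ^ n / (n + 2) := by gcongr
    _ = x ^ 2 / u ^ 2 * (u ^ (n + 2) / (n + 2)) := by field_simp; ring

lemma sum_neg_log_one_sub_le {ι : Type*} [Fintype ι] {x : ι → ℝ} {u : ℝ} (hu0 : 0 < u)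
    (hu1 : u < 1) (hsum : ∑ i, x i = 0) (hx : ∀ i, |x i| ≤ u) :
    ∑ i, -log (1 - x i) ≤ (∑ i, x i ^ 2) / u ^ 2 * (-log (1 - u) - u) := calc
  ∑ i, -log (1 - x i) = ∑ i, (-log (1 - x i) - x i) := by
    rw [Finset.sum_sub_distrib, hsum, sub_zero]
  _ ≤ ∑ i, x i ^ 2 / u ^ 2 * (-log (1 - u) - u) :=
    Finset.sum_le_sum fun i _ => neg_log_one_sub_sub_le hu0 hu1 (hx i)
  _ = (∑ i, x i ^ 2) / u ^ 2 * (-log (1 - u) - u) := by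
    rw [Finset.sum_div, Finset.sum_mul]

lemma gaussianPDFReal_mul_exp_mul_sq (s x : ℝ) :
    gaussianPDFReal 0 1 x * exp (s * x ^ 2) = (√(2 * π))⁻¹ * exp (-(1 / 2 - s) * x ^ 2) := by
  rw [gaussianPDFReal, mul_assoc, ← exp_add]
  congr 2
  · simp
  · push_cast; ring

/-- For `s ≥ 1 / 2` both sides are junk `0`: the integrand is not integrable, and `√` vanishes on
nonpositive numbers. -/
lemma integral_exp_mul_sq_gaussianReal (s : ℝ) :
    ∫ x, exp (s * x ^ 2) ∂gaussianReal 0 1 = (√(1 - 2 * s))⁻¹ := by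
  simp_rw [integral_gaussianReal_eq_integral_smul one_ne_zero, smul_eq_mul,
    gaussianPDFReal_mul_exp_mul_sq, integral_const_mul, integral_gaussian]
  rw [← sqrt_inv, ← sqrt_inv, ← sqrt_mul (by positivity)]
  congr 1
  field_simp

section GaussianChaos

variable {Ω ι : Type*} [MeasurableSpace Ω] {μ : Measure Ω}

lemma mgf_mul_sq_of_map_eq_gaussianReal {X : Ω → ℝ} (hX : μ.map X = gaussianReal 0 1)
    (b l : ℝ) :
    mgf (fun ω => b * X ω ^ 2) μ l = (√(1 - 2 * l * b))⁻¹ := by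
  have hXm : AEMeasurable X μ :=
    .of_map_ne_zero (by rw [hX]; exact IsProbabilityMeasure.ne_zero _)
  calc mgf (fun ω => b * X ω ^ 2) μ l = ∫ x, exp (l * b * x ^ 2) ∂(μ.map X) := by
        rw [integral_map hXm (by fun_prop)]
        simp only [mgf, mul_assoc]
    _ = (√(1 - 2 * l * b))⁻¹ := by
        rw [hX, integral_exp_mul_sq_gaussianReal, mul_assoc]

variable [Fintype ι] {V : ι → Ω → ℝ}

lemma mgf_sum_mul_sq (hindep : iIndepFun V μ) (hV : ∀ j, μ.map (V j) = gaussianReal 0 1)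
    (b : ι → ℝ) {l : ℝ} (hlb : ∀ j, 2 * l * b j < 1) :
    mgf (fun ω => ∑ j, b j * V j ω ^ 2) μ l = exp (∑ j, -log (1 - 2 * l * b j) / 2) := by
  have hVm : ∀ j, AEMeasurable (V j) μ := fun j =>
    .of_map_ne_zero (by rw [hV j]; exact IsProbabilityMeasure.ne_zero _)
  have hsum : (fun ω => ∑ j, b j * V j ω ^ 2) = ∑ j, fun ω => b j * V j ω ^ 2 := by
    ext ω; simp
  have hindep' : iIndepFun (fun j ω => b j * V j ω ^ 2) μ :=
    hindep.comp (fun j x => b j * x ^ 2) fun j => by fun_prop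
  rw [hsum, hindep'.mgf_sum₀ (fun j => by fun_prop), exp_sum]
  refine Finset.prod_congr rfl fun j _ => ?_
  have hpos : 0 < 1 - 2 * l * b j := by linarith [hlb j]
  rw [mgf_mul_sq_of_map_eq_gaussianReal (hV j), neg_div,
    ← log_sqrt hpos.le, exp_neg, exp_log (sqrt_pos.2 hpos)]

lemma measureReal_sum_mul_sq_ge_le (hindep : iIndepFun V μ)
    (hV : ∀ j, μ.map (V j) = gaussianReal 0 1) (b : ι → ℝ) {l : ℝ} (hl : 0 ≤ l)
    (hlb : ∀ j, 2 * l * b j < 1) (t : ℝ) :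
    μ.real {ω | t ≤ ∑ j, b j * V j ω ^ 2} ≤ exp (-l * t + ∑ j, -log (1 - 2 * l * b j) / 2) := by
  have := hindep.isProbabilityMeasure
  have hmgf := mgf_sum_mul_sq hindep hV b hlb
  have hint : Integrable (fun ω => exp (l * ∑ j, b j * V j ω ^ 2)) μ :=
    .of_integral_ne_zero (by rw [← mgf, hmgf]; positivity)
  calc μ.real {ω | t ≤ ∑ j, b j * V j ω ^ 2}
      ≤ exp (-l * t) * mgf (fun ω => ∑ j, b j * V j ω ^ 2) μ l :=
        measure_ge_le_exp_mul_mgf t hl hint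
    _ = exp (-l * t + ∑ j, -log (1 - 2 * l * b j) / 2) := by rw [hmgf, exp_add]

variable {b : ι → ℝ} {A D : ℝ}

/-- The Chernoff parameter `λ = r / (2A (1 + r))`, `r = At / D`, minimizes the resulting bound
`-λt + D / (2A²) · (-log (1 - 2λA) - 2λA)` on the exponent. -/
theorem measureReal_sum_mul_sq_ge_le_of_sum_eq_zero (hindep : iIndepFun V μ)
    (hV : ∀ j, μ.map (V j) = gaussianReal 0 1) (hA : 0 < A) (hD : 0 < D)
    (hb0 : ∑ j, b j = 0) (hb2 : ∑ j, b j ^ 2 ≤ D) (hbA : ∀ j, |b j| ≤ A) {t : ℝ} (ht : 0 < t) :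
    μ.real {ω | t ≤ ∑ j, b j * V j ω ^ 2} ≤
      (A * t / D + 1) ^ (D / (2 * A ^ 2)) * exp (-(t / (2 * A))) := by
  set r := A * t / D
  set u := r / (1 + r)
  set l := u / (2 * A)
  have hr : 0 < r := by positivity
  have hu0 : 0 < u := by positivity
  have hu1 : u < 1 := (div_lt_one (by linarith)).2 (by linarith)
  have hlA : 2 * l * A = u := by simp only [l]; field_simp
  have hx : ∀ j, |2 * l * b j| ≤ u := fun j => by
    rw [abs_mul, abs_of_pos (by positivity : 0 < 2 * l), ← hlA]
    exact mul_le_mul_of_nonneg_left (hbA j) (by positivity)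
  have hlb : ∀ j, 2 * l * b j < 1 := fun j => (le_abs_self _).trans_lt ((hx j).trans_lt hu1)
  have hlog := sum_neg_log_one_sub_le hu0 hu1 (by rw [← Finset.mul_sum, hb0, mul_zero]) hx
  have hG : 0 ≤ -log (1 - u) - u := by linarith [log_le_sub_one_of_pos (by linarith : 0 < 1 - u)]
  have hsq : (∑ j, (2 * l * b j) ^ 2) / u ^ 2 ≤ D / A ^ 2 := by
    simp_rw [mul_pow _ (b _), ← Finset.mul_sum, ← hlA, mul_pow _ A]
    rw [mul_div_mul_left _ _ (by positivity)]
    gcongr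
  calc μ.real {ω | t ≤ ∑ j, b j * V j ω ^ 2}
      ≤ exp (-l * t + ∑ j, -log (1 - 2 * l * b j) / 2) :=
        measureReal_sum_mul_sq_ge_le hindep hV b (by positivity) hlb t
    _ ≤ exp (-l * t + D / A ^ 2 * (-log (1 - u) - u) / 2) := by
        rw [← Finset.sum_div]
        gcongr
        exact hlog.trans (mul_le_mul_of_nonneg_right hsq hG)
    _ = (A * t / D + 1) ^ (D / (2 * A ^ 2)) * exp (-(t / (2 * A))) := by
        have h1u : 1 - u = (r + 1)⁻¹ := by simp only [u]; field_simp; ring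
        rw [rpow_def_of_pos (by positivity), ← exp_add, h1u, log_inv]
        congr 1
        simp only [l, u, r]
        field_simp
        ring

theorem measureReal_abs_sum_mul_sq_ge_le_of_sum_eq_zero (hindep : iIndepFun V μ)
    (hV : ∀ j, μ.map (V j) = gaussianReal 0 1) (hA : 0 < A) (hD : 0 < D)
    (hb0 : ∑ j, b j = 0) (hb2 : ∑ j, b j ^ 2 ≤ D) (hbA : ∀ j, |b j| ≤ A) {t : ℝ} (ht : 0 < t) :
    μ.real {ω | t ≤ |∑ j, b j * V j ω ^ 2|} ≤
      2 * (A * t / D + 1) ^ (D / (2 * A ^ 2)) * exp (-(t / (2 * A))) := by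
  have := hindep.isProbabilityMeasure
  have hupper := measureReal_sum_mul_sq_ge_le_of_sum_eq_zero hindep hV hA hD hb0 hb2 hbA ht
  have hlower := measureReal_sum_mul_sq_ge_le_of_sum_eq_zero hindep hV (b := -b) hA hD
    (by simp [hb0]) (by simpa using hb2) (by simpa using hbA) ht
  have hsub : {ω | t ≤ |∑ j, b j * V j ω ^ 2|} ⊆
      {ω | t ≤ ∑ j, b j * V j ω ^ 2} ∪ {ω | t ≤ ∑ j, (-b) j * V j ω ^ 2} := fun ω hω => by
    simpa [Finset.sum_neg_distrib, le_abs] using hω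
  calc μ.real {ω | t ≤ |∑ j, b j * V j ω ^ 2|}
      ≤ μ.real {ω | t ≤ ∑ j, b j * V j ω ^ 2} + μ.real {ω | t ≤ ∑ j, (-b) j * V j ω ^ 2} :=
        (measureReal_mono hsub).trans (measureReal_union_le _ _)
    _ ≤ _ := by linarith

end GaussianChaos

theorem stmt_9_general {Ω : Type} [MeasurableSpace Ω]
    (μ : Measure Ω) [IsProbabilityMeasure μ]
    (N : ℕ)
    (a : Fin N → ℝ) (A C : ℝ) (hA : 0 < A) (hC : 0 < C)
    (ha1 : ∑ i, a i = 0)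
    (ha2 : ∑ i, a i ^ 2 ≤ C)
    (ha3 : ∀ i, |a i| ≤ A)
    (Z W : Fin N → Ω → ℝ)
    (hindep : iIndepFun (Sum.elim Z W) μ)
    (hgaussZ : ∀ i, Measure.map (Z i) μ = gaussianReal 0 1)
    (hgaussW : ∀ i, Measure.map (W i) μ = gaussianReal 0 1)
    (t : ℝ) (ht : 0 < t) :
    μ {ω | t ≤ |∑ i, a i * (Z i ω ^ 2 + W i ω ^ 2)|} ≤
      ENNReal.ofReal (2 * (A * t / (2 * C) + 1) ^ (C / A ^ 2) * Real.exp (-(t / (2 * A)))) := by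
  have hV : ∀ j, μ.map (Sum.elim Z W j) = gaussianReal 0 1 := by
    rintro (i | i)
    exacts [hgaussZ i, hgaussW i]
  have key := measureReal_abs_sum_mul_sq_ge_le_of_sum_eq_zero hindep hV (b := Sum.elim a a) hA
    (by positivity : 0 < 2 * C) (by simp [Fintype.sum_sum_type, ha1])
    (by simp only [Fintype.sum_sum_type, Sum.elim_inl, Sum.elim_inr]; linarith)
    (by rintro (i | i) <;> exact ha3 i) ht
  simp only [Fintype.sum_sum_type, Sum.elim_inl, Sum.elim_inr, ← Finset.sum_add_distrib,
    ← mul_add] at key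
  rw [show 2 * C / (2 * A ^ 2) = C / A ^ 2 by field_simp] at key
  rw [← ofReal_measureReal]
  exact ENNReal.ofReal_le_ofReal key

/-- Large deviations estimate for weighted sums of independent `χ²₂` random variables
(sums of two squares of standard Gaussians), with zero-sum weights. -/
theorem stmt_9 {Ω : Type} [MeasurableSpace Ω]
    (μ : Measure Ω) [IsProbabilityMeasure μ]
    (N : ℕ) (hN : 1 ≤ N)
    (a : Fin N → ℝ) (A C : ℝ) (hA : 0 < A) (hC : 0 < C)
    (ha1 : ∑ i, a i = 0)
    (ha2 : ∑ i, a i ^ 2 ≤ C)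
    (ha3 : ∀ i, |a i| ≤ A)
    (Z W : Fin N → Ω → ℝ)
    (hmeasZ : ∀ i, Measurable (Z i)) (hmeasW : ∀ i, Measurable (W i))
    (hindep : iIndepFun (Sum.elim Z W) μ)
    (hgaussZ : ∀ i, Measure.map (Z i) μ = gaussianReal 0 1)
    (hgaussW : ∀ i, Measure.map (W i) μ = gaussianReal 0 1)
    (t : ℝ) (ht : 0 < t) :
    μ {ω | t ≤ |∑ i, a i * (Z i ω ^ 2 + W i ω ^ 2)|} ≤
      ENNReal.ofReal (2 * (A * t / (2 * C) + 1) ^ (C / A ^ 2) * Real.exp (-(t / (2 * A)))) :=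
  stmt_9_general μ N a A C hA hC ha1 ha2 ha3 Z W hindep hgaussZ hgaussW t ht
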